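/- arXiv:2210.15997 — 2 statements merged into one kernel-verified Lean document; each statement's English description precedes it below -/
import Mathlib

section
/- Let h : E → ℝ be differentiable with ρ-Lipschitz gradient (ρ ≥ 0), let δ ∈ E satisfy ‖δ‖² ≤ B for some B ≥ 0, and let λ > Bρ. Then for every x ∈ E, (sup_{τ ∈ ℝ} [ h(x + τδ) − (λ/2)τ² ]) − h(x) ≤ (1/(2(λ − Bρ))) ⟪δ, ∇h(x)⟫². (Proposition 1, upper bound.) -/
/-!
Along the line `τ ↦ x + τ • δ` the descent lemma for the `ρ`-Lipschitz gradient gives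
`h (x + τ • δ) ≤ h x + τ ⟪δ, ∇h x⟫ + (ρ B / 2) τ²`, so the penalised objective is bounded by the
concave quadratic `τ ⟪δ, ∇h x⟫ - ((λ - Bρ) / 2) τ²`, whose maximum is `⟪δ, ∇h x⟫² / (2 (λ - Bρ))`.
-/

open scoped RealInnerProductSpace

open Set

theorem le_add_half_mul_sq_of_deriv_le {f f' : ℝ → ℝ} {K : ℝ}
    (hf : ∀ t, HasDerivAt f (f' t) t) (hf' : ∀ t, 0 ≤ t → f' t ≤ K * t)
    {τ : ℝ} (hτ : 0 ≤ τ) : f τ ≤ f 0 + K / 2 * τ ^ 2 := by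
  have hB : ∀ t, HasDerivAt (fun t => f 0 + K / 2 * t ^ 2) (K * t) t := fun t =>
    (((hasDerivAt_pow 2 t).const_mul (K / 2)).const_add (f 0)).congr_deriv (by norm_num; ring)
  refine image_le_of_deriv_right_le_deriv_boundary (a := 0) (b := τ)
    (fun t _ => (hf t).continuousAt.continuousWithinAt) (fun t _ => (hf t).hasDerivWithinAt)
    (by simp) (fun t _ => (hB t).continuousAt.continuousWithinAt)
    (fun t _ => (hB t).hasDerivWithinAt) (fun t ht => hf' t ht.1) ⟨hτ, le_rfl⟩

theorem hasDerivAt_comp_add_smul {E : Type*} [NormedAddCommGroup E] [InnerProductSpace ℝ E]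
    [CompleteSpace E] {h : E → ℝ} {x v : E} {t : ℝ} (hd : DifferentiableAt ℝ h (x + t • v)) :
    HasDerivAt (fun s : ℝ => h (x + s • v)) ⟪gradient h (x + t • v), v⟫ t := by
  have hline : HasDerivAt (fun s : ℝ => x + s • v) v t := by
    simpa using ((hasDerivAt_id t).smul_const v).const_add x
  simpa [Function.comp_def] using hd.hasGradientAt.hasFDerivAt.comp_hasDerivAt t hline

theorem le_add_inner_gradient_add_half_mul_norm_sq {E : Type*} [NormedAddCommGroup E]
    [InnerProductSpace ℝ E] [CompleteSpace E] {h : E → ℝ} {ρ : ℝ}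
    (hdiff : ∀ x, DifferentiableAt ℝ h x)
    (hlip : ∀ x x' : E, ‖gradient h x - gradient h x'‖ ≤ ρ * ‖x - x'‖) (x v : E) :
    h (x + v) ≤ h x + ⟪gradient h x, v⟫ + ρ / 2 * ‖v‖ ^ 2 := by
  have hf : ∀ t : ℝ, HasDerivAt (fun s : ℝ => h (x + s • v) - s * ⟪gradient h x, v⟫)
      ⟪gradient h (x + t • v) - gradient h x, v⟫ t := fun t => by
    rw [inner_sub_left]
    exact (hasDerivAt_comp_add_smul (hdiff _)).sub (hasDerivAt_mul_const _)
  have hf' : ∀ t : ℝ, 0 ≤ t → ⟪gradient h (x + t • v) - gradient h x, v⟫ ≤ ρ * ‖v‖ ^ 2 * t :=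
    fun t ht => calc
      _ ≤ ‖gradient h (x + t • v) - gradient h x‖ * ‖v‖ := real_inner_le_norm _ _
      _ ≤ ρ * ‖t • v‖ * ‖v‖ := by gcongr; simpa using hlip (x + t • v) x
      _ = ρ * ‖v‖ ^ 2 * t := by rw [norm_smul, Real.norm_of_nonneg ht]; ring
  have hstep := le_add_half_mul_sq_of_deriv_le hf hf' zero_le_one
  simp only [one_smul, zero_smul, add_zero, one_mul, zero_mul, sub_zero, one_pow] at hstep
  linarith

theorem mul_sub_half_mul_sq_le {k : ℝ} (hk : 0 < k) (c τ : ℝ) :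
    τ * c - k / 2 * τ ^ 2 ≤ c ^ 2 / (2 * k) := by
  rw [le_div_iff₀ (by positivity)]
  nlinarith [sq_nonneg (c - k * τ)]

theorem uad_pca_upper_bound_general
    {E : Type*} [NormedAddCommGroup E] [InnerProductSpace ℝ E] [CompleteSpace E]
    (h : E → ℝ) (ρ : ℝ) (hρ : 0 ≤ ρ)
    (hdiff : ∀ x, DifferentiableAt ℝ h x)
    (hlip : ∀ x x' : E, ‖gradient h x - gradient h x'‖ ≤ ρ * ‖x - x'‖)
    (δ : E) (B : ℝ) (hδ : ‖δ‖ ^ 2 ≤ B)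
    (lam : ℝ) (hlam : B * ρ < lam)
    (x : E) :
    sSup (Set.range fun τ : ℝ => h (x + τ • δ) - lam / 2 * τ ^ 2) - h x ≤
      (1 / (2 * (lam - B * ρ))) * ⟪δ, gradient h x⟫ ^ 2 := by
  rw [sub_le_iff_le_add]
  refine csSup_le (range_nonempty _) ?_
  rintro _ ⟨τ, rfl⟩
  have hdescent := le_add_inner_gradient_add_half_mul_norm_sq hdiff hlip x (τ • δ)
  rw [real_inner_smul_right, real_inner_comm, norm_smul, mul_pow, Real.norm_eq_abs, sq_abs]
    at hdescent
  have hcurv : ρ / 2 * (τ ^ 2 * ‖δ‖ ^ 2) ≤ B * ρ / 2 * τ ^ 2 := by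
    have := mul_le_mul_of_nonneg_left hδ (by positivity : 0 ≤ ρ / 2 * τ ^ 2)
    linarith
  have hquad := mul_sub_half_mul_sq_le (sub_pos.2 hlam) ⟪δ, gradient h x⟫ τ
  rw [one_div_mul_eq_div]
  linarith

/-- **Proposition 1, upper bound.** For a `ρ`-smooth `h`, a direction `δ` with `‖δ‖² ≤ B`, and
`λ > Bρ`, `sup_τ [h(x + τδ) − (λ/2)τ²] − h(x) ≤ (1/(2(λ − Bρ))) ⟪δ, ∇h(x)⟫²`. -/
theorem uad_pca_upper_bound
    {E : Type*} [NormedAddCommGroup E] [InnerProductSpace ℝ E] [CompleteSpace E]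
    (h : E → ℝ) (ρ : ℝ) (hρ : 0 ≤ ρ)
    (hdiff : ∀ x, DifferentiableAt ℝ h x)
    (hlip : ∀ x x' : E, ‖gradient h x - gradient h x'‖ ≤ ρ * ‖x - x'‖)
    (δ : E) (B : ℝ) (hB : 0 ≤ B) (hδ : ‖δ‖ ^ 2 ≤ B)
    (lam : ℝ) (hlam : B * ρ < lam)
    (x : E) :
    sSup (Set.range fun τ : ℝ => h (x + τ • δ) - lam / 2 * τ ^ 2) - h x ≤
      (1 / (2 * (lam - B * ρ))) * ⟪δ, gradient h x⟫ ^ 2 :=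
  uad_pca_upper_bound_general h ρ hρ hdiff hlip δ B hδ lam hlam x
end

section
/- Let M be a real symmetric positive semidefinite d×d matrix with largest eigenvalue λ₁ = λ_max(M). If Δ is a real symmetric PSD matrix with trace(Δ) = 1 and trace(M·Δ) = λ₁, then the column space of Δ is contained in the eigenspace of M for λ₁: for every x ∈ ℝ^d, M (Δ x) = λ₁ (Δ x). Consequently rank(Δ) is at most the dimension of the eigenspace { v : M v = λ₁ v }, so if λ₁ has multiplicity at most r then every maximizer Δ of trace(M·Δ) over the trace-one PSD spectraplex has rank at most r. (Rank-r maximizer lemma used in the proof of Theorem 2, part 2.) -/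
/-!
Since `λ₁` bounds every eigenvalue of `M`, the matrix `λ₁ • 1 - M` is positive semidefinite,
and the maximality assumption says exactly that its trace pairing with `Δ` vanishes. For
positive semidefinite `A = R⋆R` and `B = QQ⋆` one has `trace (A * B) = ‖RQ‖²` (Frobenius), so
a vanishing trace pairing forces `A * B = 0`; hence `M * Δ = λ₁ • Δ`, i.e. every column of `Δ`
is a `λ₁`-eigenvector of `M`.
-/

open Matrix
open scoped MatrixOrder ComplexOrder

namespace Matrix

variable {n 𝕜 : Type*} [Fintype n] [RCLike 𝕜]

theorem PosSemidef.mul_eq_zero_of_trace_mul_eq_zero {A B : Matrix n n 𝕜}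
    (hA : A.PosSemidef) (hB : B.PosSemidef) (h : (A * B).trace = 0) : A * B = 0 := by
  classical
  obtain ⟨R, rfl⟩ := CStarAlgebra.nonneg_iff_eq_star_mul_self.mp hA.nonneg
  obtain ⟨Q, rfl⟩ := CStarAlgebra.nonneg_iff_eq_mul_star_self.mp hB.nonneg
  have hRQ : R * Q = 0 := by
    rw [← trace_conjTranspose_mul_self_eq_zero_iff, ← h, conjTranspose_mul, ← trace_mul_cycle]
    simp only [star_eq_conjTranspose, Matrix.mul_assoc]
  rw [Matrix.mul_assoc, ← Matrix.mul_assoc R, hRQ, Matrix.zero_mul, Matrix.mul_zero]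

theorem IsHermitian.posSemidef_smul_one_sub [DecidableEq n] {A : Matrix n n 𝕜}
    (hA : A.IsHermitian) {c : ℝ} (hc : ∀ i, hA.eigenvalues i ≤ c) :
    (c • 1 - A).PosSemidef := by
  rw [← le_iff, ← Algebra.algebraMap_eq_smul_one]
  refine le_algebraMap_of_spectrum_le (fun x hx => ?_) hA
  obtain ⟨i, rfl⟩ := hA.spectrum_real_eq_range_eigenvalues ▸ hx
  exact hc i

theorem IsHermitian.mul_eq_smul_of_trace_mul_eq [DecidableEq n] {A B : Matrix n n 𝕜}
    (hA : A.IsHermitian) {c : ℝ} (hc : ∀ i, hA.eigenvalues i ≤ c) (hB : B.PosSemidef)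
    (h : (A * B).trace = c • B.trace) : A * B = c • B := by
  have hNB : (c • 1 - A) * B = 0 := by
    refine (hA.posSemidef_smul_one_sub hc).mul_eq_zero_of_trace_mul_eq_zero hB ?_
    rw [Matrix.sub_mul, trace_sub, smul_one_mul, trace_smul, h, sub_self]
  rw [Matrix.sub_mul, smul_one_mul, sub_eq_zero] at hNB
  exact hNB.symm

theorem range_mulVecLin_le_eigenspace [DecidableEq n] {R : Type*} [CommRing R]
    {A B : Matrix n n R} {c : R}
    (h : A * B = c • B) : LinearMap.range B.mulVecLin ≤ Module.End.eigenspace (toLin' A) c := by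
  rintro _ ⟨x, rfl⟩
  rw [Module.End.mem_eigenspace_iff, toLin'_apply, mulVecLin_apply, mulVec_mulVec, h, smul_mulVec]

theorem rank_le_finrank_eigenspace [DecidableEq n] {K : Type*} [Field K]
    {A B : Matrix n n K} {c : K}
    (h : A * B = c • B) : B.rank ≤ Module.finrank K (Module.End.eigenspace (toLin' A) c) :=
  Submodule.finrank_mono (range_mulVecLin_le_eigenspace h)

end Matrix

/-- **Rank-r maximizer lemma (proof of Theorem 2, part 2).** If `Δ` is a trace-one PSD
maximizer of `trace(M·Δ)` (achieving the largest eigenvalue `λ₁` of the symmetric PSD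
matrix `M`), then the column space of `Δ` lies in the top eigenspace of `M`, so
`rank(Δ)` is at most the multiplicity of `λ₁`. -/
theorem spectraplex_maximizer_column_space_in_top_eigenspace
    {d : ℕ} (M : Matrix (Fin d) (Fin d) ℝ) (hpsd : M.PosSemidef)
    (lam1 : ℝ) (hlam1 : lam1 = ⨆ i, hpsd.1.eigenvalues i)
    (Δ : Matrix (Fin d) (Fin d) ℝ) (hΔ : Δ.PosSemidef) (htr : Δ.trace = 1)
    (hmax : (M * Δ).trace = lam1) :
    (∀ x : Fin d → ℝ, M.mulVec (Δ.mulVec x) = lam1 • Δ.mulVec x) ∧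
    Δ.rank ≤ Module.finrank ℝ (Module.End.eigenspace (Matrix.toLin' M) lam1) ∧
    ∀ r : ℕ, Module.finrank ℝ (Module.End.eigenspace (Matrix.toLin' M) lam1) ≤ r →
      Δ.rank ≤ r := by
  have hle : ∀ i, hpsd.1.eigenvalues i ≤ lam1 :=
    hlam1 ▸ le_ciSup (Set.finite_range _).bddAbove
  have hMΔ : M * Δ = lam1 • Δ :=
    hpsd.1.mul_eq_smul_of_trace_mul_eq hle hΔ (by rw [hmax, htr, smul_eq_mul, mul_one])
  have hrank := rank_le_finrank_eigenspace hMΔ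
  exact ⟨fun x => by rw [mulVec_mulVec, hMΔ, smul_mulVec], hrank, fun r hr => hrank.trans hr⟩
end
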